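/- arXiv:1307.4383 — 2 statements merged into one kernel-verified Lean document; each statement's English description precedes it below -/
import Mathlib

section
/- Let Ω : X → Y be a z-linear map, F a finite-dimensional subspace of X, x₁,…,xₙ points in the unit sphere of F with xᵢ ≠ ±xⱼ for i ≠ j, and ε > 0. Then there exists a z-linear map Ω_F : X → Y such that: (1) Ω_F xᵢ = Ω xᵢ for all i; (2) ‖Ω_F − Ω‖ ≤ (1+ε)Z(Ω); (3) Z(Ω_F) ≤ (3+ε)Z(Ω); (4) the image Ω_F(F) spans a finite-dimensional subspace of Y. -/
open scoped BigOperators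

noncomputable section

/-- A homogeneous map between Banach spaces. -/
def IsHomog {X Y : Type*} [NormedAddCommGroup X] [NormedSpace ℝ X]
    [NormedAddCommGroup Y] [NormedSpace ℝ Y] (f : X → Y) : Prop :=
  ∀ (c : ℝ) (x : X), f (c • x) = c • f x

/-- `f` satisfies the z-linearity estimate with constant `C`. -/
def ZlinWith {X Y : Type*} [NormedAddCommGroup X] [NormedSpace ℝ X]
    [NormedAddCommGroup Y] [NormedSpace ℝ Y] (f : X → Y) (C : ℝ) : Prop :=
  ∀ (n : ℕ) (x : Fin n → X),
    ‖f (∑ j, x j) - ∑ j, f (x j)‖ ≤ C * ∑ j, ‖x j‖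

/-- A z-linear map. -/
def IsZlin {X Y : Type*} [NormedAddCommGroup X] [NormedSpace ℝ X]
    [NormedAddCommGroup Y] [NormedSpace ℝ Y] (f : X → Y) : Prop :=
  IsHomog f ∧ ∃ C > 0, ZlinWith f C

/-- The z-linearity constant `Z(f)`. -/
noncomputable def zconst {X Y : Type*} [NormedAddCommGroup X] [NormedSpace ℝ X]
    [NormedAddCommGroup Y] [NormedSpace ℝ Y] (f : X → Y) : ℝ :=
  sInf {C : ℝ | 0 ≤ C ∧ ZlinWith f C}

/-- `0 → Y → X → Z → 0` is an exact sequence of Banach spaces. -/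
def IsExactSeq {Y X Z : Type*} [NormedAddCommGroup Y] [NormedSpace ℝ Y]
    [NormedAddCommGroup X] [NormedSpace ℝ X]
    [NormedAddCommGroup Z] [NormedSpace ℝ Z]
    (i : Y →L[ℝ] X) (q : X →L[ℝ] Z) : Prop :=
  Function.Injective i ∧ Function.Surjective q ∧
    LinearMap.range (i : Y →ₗ[ℝ] X) = LinearMap.ker (q : X →ₗ[ℝ] Z)

/-- `ω` is a z-linear map associated with the exact sequence `0 → Y → X → Z → 0`:
it is the difference of a bounded homogeneous selection and a linear selection
of the quotient map. -/
def IsAssoc {Y X Z : Type*} [NormedAddCommGroup Y] [NormedSpace ℝ Y]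
    [NormedAddCommGroup X] [NormedSpace ℝ X]
    [NormedAddCommGroup Z] [NormedSpace ℝ Z]
    (ω : Z → Y) (i : Y →L[ℝ] X) (q : X →L[ℝ] Z) : Prop :=
  IsExactSeq i q ∧
    ∃ (b : Z → X) (l : Z →ₗ[ℝ] X), IsHomog b ∧ (∃ M : ℝ, ∀ z, ‖b z‖ ≤ M * ‖z‖) ∧
      (∀ z, q (b z) = z) ∧ (∀ z, q (l z) = z) ∧ (∀ z, i (ω z) = b z - l z)

/-- Equivalence of two exact sequences with the same subspace and quotient. -/
def SeqEquiv {Y X X' Z : Type*} [NormedAddCommGroup Y] [NormedSpace ℝ Y]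
    [NormedAddCommGroup X] [NormedSpace ℝ X]
    [NormedAddCommGroup X'] [NormedSpace ℝ X']
    [NormedAddCommGroup Z] [NormedSpace ℝ Z]
    (i : Y →L[ℝ] X) (q : X →L[ℝ] Z) (i' : Y →L[ℝ] X') (q' : X' →L[ℝ] Z) : Prop :=
  ∃ T : X →L[ℝ] X', (∀ y, T (i y) = i' y) ∧ (∀ x, q' (T x) = q x)

/-- The exact sequence `0 → Y → X → Z → 0` splits. -/
def Splits {Y X Z : Type*} [NormedAddCommGroup Y] [NormedSpace ℝ Y]
    [NormedAddCommGroup X] [NormedSpace ℝ X]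
    [NormedAddCommGroup Z] [NormedSpace ℝ Z]
    (i : Y →L[ℝ] X) (q : X →L[ℝ] Z) : Prop :=
  ∃ r : Z →L[ℝ] X, ∀ z, q (r z) = z

/-- The exact sequence `0 → Y → X → Z → 0` locally splits: its dual sequence
`0 → Z* → X* → Y* → 0` splits, i.e. the dual `i*` of the embedding admits a
bounded linear section. -/
def LocSplits {Y X Z : Type*} [NormedAddCommGroup Y] [NormedSpace ℝ Y]
    [NormedAddCommGroup X] [NormedSpace ℝ X]
    [NormedAddCommGroup Z] [NormedSpace ℝ Z]
    (i : Y →L[ℝ] X) (q : X →L[ℝ] Z) : Prop :=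
  ∃ s : StrongDual ℝ Y →L[ℝ] StrongDual ℝ X,
    ∀ (g : StrongDual ℝ Y) (y : Y), s g (i y) = g y

/-- The λ-bounded approximation property. -/
def HasBAPWith (X : Type*) [NormedAddCommGroup X] [NormedSpace ℝ X] (l : ℝ) : Prop :=
  ∀ F : Submodule ℝ X, FiniteDimensional ℝ F →
    ∃ T : X →L[ℝ] X, FiniteDimensional ℝ (LinearMap.range (T : X →ₗ[ℝ] X)) ∧
      ‖T‖ ≤ l ∧ ∀ f ∈ F, T f = f

/-- The bounded approximation property. -/
def HasBAP (X : Type*) [NormedAddCommGroup X] [NormedSpace ℝ X] : Prop :=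
  ∃ l : ℝ, 1 ≤ l ∧ HasBAPWith X l

/-- A Lindenstrauss–Pełczyński `𝓛₁`-space. -/
def IsL1Space (E : Type*) [NormedAddCommGroup E] [NormedSpace ℝ E] : Prop :=
  ∃ l : ℝ, 1 ≤ l ∧ ∀ F : Submodule ℝ E, FiniteDimensional ℝ F →
    ∃ G : Submodule ℝ E, F ≤ G ∧ FiniteDimensional ℝ G ∧
      ∃ (n : ℕ) (T : G ≃L[ℝ] PiLp 1 fun _ : Fin n => ℝ),
        ‖T.toContinuousLinearMap‖ * ‖T.symm.toContinuousLinearMap‖ ≤ l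

/-- A Lindenstrauss–Pełczyński `𝓛∞`-space. -/
def IsLinftySpace (E : Type*) [NormedAddCommGroup E] [NormedSpace ℝ E] : Prop :=
  ∃ l : ℝ, 1 ≤ l ∧ ∀ F : Submodule ℝ E, FiniteDimensional ℝ F →
    ∃ G : Submodule ℝ E, F ≤ G ∧ FiniteDimensional ℝ G ∧
      ∃ (n : ℕ) (T : G ≃L[ℝ] PiLp ⊤ fun _ : Fin n => ℝ),
        ‖T.toContinuousLinearMap‖ * ‖T.symm.toContinuousLinearMap‖ ≤ l

/-!
Take the z-linearity constant `Z = Z(Ω)`, which is attained. On the finite-dimensional space `F`,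
`Ω` is approximated to within `(1 + ε) Z` on the unit sphere by a finite-dimensional subspace `W`:
for `v` near a point `u` of a finite net, `Ω v ≈ Ω u + Ω (v - u)` up to `Z (‖u‖ + ‖v - u‖)`, and
`Ω (v - u)` is within `Z K ‖v - u‖` of the span of the images of a basis. Replacing `Ω` on the unit
sphere of `F` (away from the lines through the `xₖ`) by such approximants and extending to a
homogeneous map moves `Ω` by at most `(1 + ε) Z ‖p‖`, which costs at most `2 (1 + ε) Z` in the
z-linearity constant.
-/

section ZLinear

variable {X Y : Type*} [NormedAddCommGroup X] [NormedSpace ℝ X]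
  [NormedAddCommGroup Y] [NormedSpace ℝ Y]

theorem IsHomog.map_neg {Ω : X → Y} (hΩ : IsHomog Ω) (p : X) : Ω (-p) = -Ω p := by
  simpa using hΩ (-1) p

theorem ZlinWith.mono {f : X → Y} {C D : ℝ} (hf : ZlinWith f C) (hCD : C ≤ D) :
    ZlinWith f D := fun n x =>
  (hf n x).trans (mul_le_mul_of_nonneg_right hCD (Finset.sum_nonneg fun j _ => norm_nonneg _))

theorem ZlinWith.norm_map_add_sub_le {f : X → Y} {C : ℝ} (hf : ZlinWith f C) (a b : X) :
    ‖f (a + b) - (f a + f b)‖ ≤ C * (‖a‖ + ‖b‖) := by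
  simpa [Fin.sum_univ_two] using hf 2 ![a, b]

theorem ZlinWith.of_norm_sub_le {Ω Ψ : X → Y} {C D : ℝ} (hΩ : ZlinWith Ω C) (hD : 0 ≤ D)
    (hΨ : ∀ p, ‖Ψ p - Ω p‖ ≤ D * ‖p‖) : ZlinWith Ψ (C + 2 * D) := by
  intro n x
  set S := ∑ j, ‖x j‖
  have hsum : ‖∑ j, x j‖ ≤ S := norm_sum_le _ _
  have hterms : ‖∑ j, Ω (x j) - ∑ j, Ψ (x j)‖ ≤ D * S := by
    rw [← Finset.sum_sub_distrib, Finset.mul_sum]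
    refine (norm_sum_le _ _).trans (Finset.sum_le_sum fun j _ => ?_)
    rw [norm_sub_rev]
    exact hΨ _
  calc ‖Ψ (∑ j, x j) - ∑ j, Ψ (x j)‖
      = ‖(Ψ (∑ j, x j) - Ω (∑ j, x j)) + (Ω (∑ j, x j) - ∑ j, Ω (x j))
          + (∑ j, Ω (x j) - ∑ j, Ψ (x j))‖ := by congr 1; abel
    _ ≤ ‖Ψ (∑ j, x j) - Ω (∑ j, x j)‖ + ‖Ω (∑ j, x j) - ∑ j, Ω (x j)‖
          + ‖∑ j, Ω (x j) - ∑ j, Ψ (x j)‖ := norm_add₃_le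
    _ ≤ D * S + C * S + D * S :=
        add_le_add (add_le_add ((hΨ _).trans (mul_le_mul_of_nonneg_left hsum hD)) (hΩ n x)) hterms
    _ = (C + 2 * D) * S := by ring

theorem zconst_nonneg (f : X → Y) : 0 ≤ zconst f :=
  Real.sInf_nonneg fun _ hC => hC.1

theorem zconst_le {f : X → Y} {C : ℝ} (hC0 : 0 ≤ C) (hf : ZlinWith f C) : zconst f ≤ C :=
  csInf_le ⟨0, fun _ hD => hD.1⟩ ⟨hC0, hf⟩

theorem IsZlin.zlinWith_zconst {f : X → Y} (hf : IsZlin f) : ZlinWith f (zconst f) := by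
  obtain ⟨-, C₀, hC₀, hfC₀⟩ := hf
  intro n x
  rcases (Finset.sum_nonneg fun j _ => norm_nonneg (x j)).eq_or_lt with hS | hS
  · have := hfC₀ n x
    rw [← hS, mul_zero] at this
    rwa [← hS, mul_zero]
  · rw [← div_le_iff₀ hS]
    exact le_csInf ⟨C₀, hC₀.le, hfC₀⟩ fun C hC => (div_le_iff₀ hS).2 (hC.2 n x)

end ZLinear

section Homogenize

variable {X Y : Type*} [NormedAddCommGroup X] [NormedSpace ℝ X]
  [NormedAddCommGroup Y] [NormedSpace ℝ Y]

/-- The homogeneous extension of the odd part of `g` on the unit sphere: taking the odd part is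
what makes it commute with negative scalars. -/
def homogenize (g : X → Y) (p : X) : Y :=
  (‖p‖ / 2) • (g (‖p‖⁻¹ • p) - g (-(‖p‖⁻¹ • p)))

theorem homogenize_neg (g : X → Y) (p : X) : homogenize g (-p) = -homogenize g p := by
  simp only [homogenize, norm_neg, neg_neg, ← smul_neg, neg_sub]

theorem homogenize_smul_of_pos (g : X → Y) {c : ℝ} (hc : 0 < c) (p : X) :
    homogenize g (c • p) = c • homogenize g p := by
  have hdir : ‖c • p‖⁻¹ • (c • p) = ‖p‖⁻¹ • p := by
    rw [norm_smul, Real.norm_of_nonneg hc.le, smul_smul, mul_inv, mul_right_comm,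
      inv_mul_cancel₀ hc.ne', one_mul]
  rw [homogenize, homogenize, hdir, norm_smul, Real.norm_of_nonneg hc.le, smul_smul, mul_div_assoc]

theorem isHomog_homogenize (g : X → Y) : IsHomog (homogenize g) := by
  intro c p
  rcases lt_trichotomy c 0 with hc | rfl | hc
  · obtain ⟨d, hd, rfl⟩ : ∃ d, 0 < d ∧ c = -d := ⟨-c, by linarith, by ring⟩
    rw [neg_smul, ← smul_neg, homogenize_smul_of_pos g hd, homogenize_neg, smul_neg, neg_smul]
  · simp [homogenize]
  · exact homogenize_smul_of_pos g hc p

theorem IsHomog.homogenize_eq {Ω : X → Y} (hΩ : IsHomog Ω) : homogenize Ω = Ω := by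
  funext p
  rcases eq_or_ne p 0 with rfl | hp
  · simpa [homogenize] using (hΩ 0 0).symm
  · rw [homogenize, hΩ.map_neg, sub_neg_eq_add, hΩ, ← two_smul ℝ, smul_smul, smul_smul]
    field_simp [norm_ne_zero_iff.2 hp]
    simp

theorem homogenize_sub (g h : X → Y) : homogenize (g - h) = homogenize g - homogenize h := by
  funext p
  simp only [homogenize, Pi.sub_apply, ← smul_sub]
  abel_nf

theorem norm_homogenize_le {g : X → Y} {M : ℝ} (hg : ∀ v, ‖v‖ = 1 → ‖g v‖ ≤ M) (p : X) :
    ‖homogenize g p‖ ≤ M * ‖p‖ := by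
  rcases eq_or_ne p 0 with rfl | hp
  · simp [homogenize]
  have hunit : ‖‖p‖⁻¹ • p‖ = 1 := norm_smul_inv_norm hp
  calc ‖homogenize g p‖ ≤ ‖p‖ / 2 * (‖g (‖p‖⁻¹ • p)‖ + ‖g (-(‖p‖⁻¹ • p))‖) := by
        rw [homogenize, norm_smul, Real.norm_of_nonneg (by positivity)]
        gcongr
        exact norm_sub_le _ _
    _ ≤ ‖p‖ / 2 * (M + M) := by
        gcongr
        · exact hg _ hunit
        · exact hg _ (by rwa [norm_neg])
    _ = M * ‖p‖ := by ring

theorem norm_homogenize_sub_le {Ω g : X → Y} (hΩ : IsHomog Ω) {M : ℝ}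
    (hg : ∀ v, ‖v‖ = 1 → ‖g v - Ω v‖ ≤ M) (p : X) : ‖homogenize g p - Ω p‖ ≤ M * ‖p‖ := by
  have := norm_homogenize_le (g := g - Ω) hg p
  rwa [homogenize_sub, hΩ.homogenize_eq] at this

theorem homogenize_eq_of_eq {Ω g : X → Y} (hΩ : IsHomog Ω) {p : X}
    (h₁ : g (‖p‖⁻¹ • p) = Ω (‖p‖⁻¹ • p)) (h₂ : g (-(‖p‖⁻¹ • p)) = Ω (-(‖p‖⁻¹ • p))) :
    homogenize g p = Ω p := by
  conv_rhs => rw [← hΩ.homogenize_eq]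
  rw [homogenize, homogenize, h₁, h₂]

theorem homogenize_mem {g : X → Y} {F : Submodule ℝ X} {W : Submodule ℝ Y}
    (hg : ∀ v ∈ F, ‖v‖ = 1 → g v ∈ W) {p : X} (hp : p ∈ F) : homogenize g p ∈ W := by
  rcases eq_or_ne p 0 with rfl | hp0
  · simp [homogenize]
  have hunit : ‖‖p‖⁻¹ • p‖ = 1 := norm_smul_inv_norm hp0
  exact W.smul_mem _ <| W.sub_mem (hg _ (F.smul_mem _ hp) hunit)
    (hg _ (F.neg_mem (F.smul_mem _ hp)) (by rwa [norm_neg]))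

theorem IsHomog.exists_isHomog_approx_into_sup_span {ι : Type*} {Ω : X → Y} (hΩ : IsHomog Ω)
    (F : Submodule ℝ X) (W : Submodule ℝ Y) {M : ℝ} (hM : 0 ≤ M)
    (happrox : ∀ v ∈ F, ‖v‖ = 1 → ∃ w ∈ W, ‖w - Ω v‖ ≤ M) (x : ι → X) :
    ∃ Ψ : X → Y, IsHomog Ψ ∧ (∀ k, Ψ (x k) = Ω (x k)) ∧ (∀ p, ‖Ψ p - Ω p‖ ≤ M * ‖p‖) ∧
      ∀ p ∈ F, Ψ p ∈ W ⊔ Submodule.span ℝ (Set.range fun k => Ω (x k)) := by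
  classical
  choose! s hsW hs using happrox
  set L : Set X := ⋃ k, ((ℝ ∙ x k : Submodule ℝ X) : Set X)
  set g : X → Y := fun v => if v ∈ F ∧ v ∉ L then s v else Ω v
  have hgL : ∀ v ∈ L, g v = Ω v := fun v hv => if_neg fun h => h.2 hv
  have hg : ∀ v, ‖v‖ = 1 → ‖g v - Ω v‖ ≤ M := fun v hv => by
    by_cases h : v ∈ F ∧ v ∉ L
    · simpa only [g, if_pos h] using hs v h.1 hv
    · simpa only [g, if_neg h, sub_self, norm_zero] using hM
  have hgF : ∀ v ∈ F, ‖v‖ = 1 → g v ∈ W ⊔ Submodule.span ℝ (Set.range fun k => Ω (x k)) := by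
    intro v hv hv1
    by_cases hvL : v ∈ L
    · obtain ⟨k, hk⟩ := Set.mem_iUnion.1 hvL
      obtain ⟨a, rfl⟩ := Submodule.mem_span_singleton.1 hk
      rw [hgL _ hvL, hΩ]
      exact Submodule.mem_sup_right (Submodule.smul_mem _ _ (Submodule.subset_span ⟨k, rfl⟩))
    · simpa only [g, if_pos (And.intro hv hvL)] using Submodule.mem_sup_left (hsW v hv hv1)
  refine ⟨homogenize g, isHomog_homogenize g, fun k => ?_, norm_homogenize_sub_le hΩ hg,
    fun p hp => homogenize_mem hgF hp⟩
  have hline : ‖x k‖⁻¹ • x k ∈ (ℝ ∙ x k) :=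
    Submodule.smul_mem _ _ (Submodule.mem_span_singleton_self _)
  exact homogenize_eq_of_eq hΩ (hgL _ (Set.mem_iUnion.2 ⟨k, hline⟩))
    (hgL _ (Set.mem_iUnion.2 ⟨k, Submodule.neg_mem _ hline⟩))

end Homogenize

section FiniteDimensional

variable {X Y : Type*} [NormedAddCommGroup X] [NormedSpace ℝ X]
  [NormedAddCommGroup Y] [NormedSpace ℝ Y]

theorem Submodule.exists_finite_net_unit_sphere (F : Submodule ℝ X) [FiniteDimensional ℝ F]
    {η : ℝ} (hη : 0 < η) :
    ∃ t : Set X, t.Finite ∧ t ⊆ F ∧ ∀ v ∈ F, ‖v‖ = 1 → ∃ u ∈ t, ‖v - u‖ < η := by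
  obtain ⟨t, ht, hcov⟩ :=
    Metric.totallyBounded_iff.mp (isCompact_sphere (0 : F) 1).totallyBounded η hη
  refine ⟨Subtype.val '' t, ht.image _, by rintro _ ⟨u, -, rfl⟩; exact u.2, fun v hv hv1 => ?_⟩
  obtain ⟨u, hu, hvu⟩ :=
    Set.mem_iUnion₂.mp (hcov (show (⟨v, hv⟩ : F) ∈ Metric.sphere 0 1 by simpa using hv1))
  rw [Metric.mem_ball, dist_eq_norm] at hvu
  exact ⟨u, ⟨u, hu, rfl⟩, hvu⟩

theorem Submodule.exists_sum_smul_eq_norm_le (F : Submodule ℝ X) [FiniteDimensional ℝ F] :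
    ∃ (m : ℕ) (b : Fin m → X) (K : ℝ), 0 ≤ K ∧
      ∀ y ∈ F, ∃ c : Fin m → ℝ, ∑ i, c i • b i = y ∧ ∑ i, ‖c i • b i‖ ≤ K * ‖y‖ := by
  set B := Module.finBasis ℝ F
  set L : F →L[ℝ] (Fin (Module.finrank ℝ F) → ℝ) :=
    LinearMap.toContinuousLinearMap B.equivFun.toLinearMap
  refine ⟨_, fun i => B i, ‖L‖ * ∑ i, ‖(B i : X)‖, by positivity, fun y hy => ?_⟩
  refine ⟨B.equivFun ⟨y, hy⟩, ?_, ?_⟩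
  · simpa only [Submodule.coe_sum, Submodule.coe_smul] using
      congrArg Subtype.val (B.sum_equivFun ⟨y, hy⟩)
  · rw [mul_comm, Finset.mul_sum, Finset.mul_sum]
    refine Finset.sum_le_sum fun i _ => ?_
    rw [norm_smul, ← mul_assoc]
    gcongr
    calc ‖B.equivFun ⟨y, hy⟩ i‖ ≤ ‖L ⟨y, hy⟩‖ := norm_le_pi_norm (L ⟨y, hy⟩) i
      _ ≤ ‖y‖ * ‖L‖ := by rw [mul_comm]; exact L.le_opNorm _

theorem ZlinWith.exists_finiteDimensional_approx {Ω : X → Y} {C : ℝ} (hΩ : IsHomog Ω)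
    (hC : ZlinWith Ω C) (hC0 : 0 ≤ C) (F : Submodule ℝ X) [FiniteDimensional ℝ F] :
    ∃ (W : Submodule ℝ Y) (K : ℝ), FiniteDimensional ℝ W ∧ 0 ≤ K ∧
      ∀ y ∈ F, ∃ w ∈ W, ‖w - Ω y‖ ≤ C * K * ‖y‖ := by
  obtain ⟨m, b, K, hK, hrepr⟩ := F.exists_sum_smul_eq_norm_le
  refine ⟨Submodule.span ℝ (Set.range (Ω ∘ b)), K, FiniteDimensional.span_of_finite ℝ
    (Set.finite_range _), hK, fun y hy => ?_⟩
  obtain ⟨c, rfl, hc⟩ := hrepr y hy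
  refine ⟨∑ i, c i • Ω (b i), Submodule.sum_mem _ fun i _ =>
    Submodule.smul_mem _ _ (Submodule.subset_span ⟨i, rfl⟩), ?_⟩
  calc ‖∑ i, c i • Ω (b i) - Ω (∑ i, c i • b i)‖
      = ‖Ω (∑ i, c i • b i) - ∑ i, Ω (c i • b i)‖ := by
        simp only [fun i => hΩ (c i) (b i), norm_sub_rev]
    _ ≤ C * ∑ i, ‖c i • b i‖ := hC _ _
    _ ≤ C * K * ‖∑ i, c i • b i‖ := by rw [mul_assoc]; gcongr

theorem ZlinWith.exists_finiteDimensional_approx_unit_sphere {Ω : X → Y} {C ε : ℝ}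
    (hΩ : IsHomog Ω) (hC : ZlinWith Ω C) (hC0 : 0 ≤ C) (F : Submodule ℝ X)
    [FiniteDimensional ℝ F] (hε : 0 < ε) :
    ∃ W : Submodule ℝ Y, FiniteDimensional ℝ W ∧
      ∀ v ∈ F, ‖v‖ = 1 → ∃ w ∈ W, ‖w - Ω v‖ ≤ (1 + ε) * C := by
  obtain ⟨W₀, K, hW₀, hK, happrox⟩ := hC.exists_finiteDimensional_approx hΩ hC0 F
  set η := ε / (K + 2)
  have hη : (K + 2) * η = ε := mul_div_cancel₀ ε (by positivity)
  obtain ⟨t, ht, htF, hnet⟩ := F.exists_finite_net_unit_sphere (show 0 < η by positivity)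
  refine ⟨W₀ ⊔ Submodule.span ℝ (Ω '' t), by
    have := FiniteDimensional.span_of_finite ℝ (ht.image Ω); infer_instance, fun v hv hv1 => ?_⟩
  obtain ⟨u, hut, hvu⟩ := hnet v hv hv1
  obtain ⟨w₀, hw₀, hw₀_le⟩ := happrox (v - u) (F.sub_mem hv (htF hut))
  refine ⟨w₀ + Ω u, Submodule.add_mem_sup hw₀ (Submodule.subset_span ⟨u, hut, rfl⟩), ?_⟩
  have hu : ‖u‖ ≤ 1 + ‖v - u‖ := by
    have := norm_sub_norm_le u v
    rw [norm_sub_rev u v, hv1] at this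
    linarith
  have hηK : (K + 2) * ‖v - u‖ ≤ (K + 2) * η := by gcongr
  calc ‖w₀ + Ω u - Ω v‖
      = ‖(w₀ - Ω (v - u)) - (Ω (u + (v - u)) - (Ω u + Ω (v - u)))‖ := by
        rw [add_sub_cancel]; congr 1; abel
    _ ≤ ‖w₀ - Ω (v - u)‖ + ‖Ω (u + (v - u)) - (Ω u + Ω (v - u))‖ := norm_sub_le _ _
    _ ≤ C * K * ‖v - u‖ + C * (‖u‖ + ‖v - u‖) :=
        add_le_add hw₀_le (hC.norm_map_add_sub_le _ _)
    _ = C * (‖u‖ + (K + 1) * ‖v - u‖) := by ring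
    _ ≤ C * (1 + (K + 2) * η) := mul_le_mul_of_nonneg_left (by linarith) hC0
    _ = (1 + ε) * C := by rw [hη, mul_comm]

end FiniteDimensional

theorem statement3_general {X Y : Type*}
    [NormedAddCommGroup X] [NormedSpace ℝ X]
    [NormedAddCommGroup Y] [NormedSpace ℝ Y]
    (Ω : X → Y) (hΩ : IsZlin Ω)
    (F : Submodule ℝ X) (hF : FiniteDimensional ℝ F)
    (n : ℕ) (x : Fin n → X)
    (ε : ℝ) (hε : 0 < ε) :
    ∃ ΩF : X → Y, IsZlin ΩF ∧
      (∀ k, ΩF (x k) = Ω (x k)) ∧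
      (∀ p, ‖ΩF p - Ω p‖ ≤ (1 + ε) * zconst Ω * ‖p‖) ∧
      zconst ΩF ≤ (3 + ε) * zconst Ω ∧
      FiniteDimensional ℝ (Submodule.span ℝ (ΩF '' (F : Set X))) := by
  set Z := zconst Ω
  have hZ : ZlinWith Ω Z := hΩ.zlinWith_zconst
  have hZ0 : 0 ≤ Z := zconst_nonneg Ω
  obtain ⟨W, hW, happrox⟩ :=
    hZ.exists_finiteDimensional_approx_unit_sphere hΩ.1 hZ0 F (half_pos hε)
  obtain ⟨Ψ, hΨ, hΨx, hΨΩ, hΨF⟩ :=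
    hΩ.1.exists_isHomog_approx_into_sup_span F W (by positivity) happrox x
  have hzl : ZlinWith Ψ ((3 + ε) * Z) :=
    (hZ.of_norm_sub_le (by positivity) hΨΩ).mono (by linarith)
  refine ⟨Ψ, ⟨hΨ, (3 + ε) * Z + 1, by positivity, hzl.mono (by linarith)⟩, hΨx,
    fun p => (hΨΩ p).trans (by gcongr; linarith), zconst_le (by positivity) hzl, ?_⟩
  have := FiniteDimensional.span_of_finite ℝ (Set.finite_range fun k => Ω (x k))
  exact Submodule.finiteDimensional_of_le
    (S₂ := W ⊔ Submodule.span ℝ (Set.range fun k => Ω (x k)))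
    (Submodule.span_le.2 (by rintro _ ⟨p, hp, rfl⟩; exact hΨF p hp))

/-- A z-linear map can be modified on a finite-dimensional subspace so as to
have finite-dimensional range there, keeping control of the constants. -/
theorem statement3 {X Y : Type*}
    [NormedAddCommGroup X] [NormedSpace ℝ X] [CompleteSpace X]
    [NormedAddCommGroup Y] [NormedSpace ℝ Y] [CompleteSpace Y]
    (Ω : X → Y) (hΩ : IsZlin Ω)
    (F : Submodule ℝ X) (hF : FiniteDimensional ℝ F)
    (n : ℕ) (x : Fin n → X) (hxF : ∀ k, x k ∈ F) (hxs : ∀ k, ‖x k‖ = 1)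
    (hdist : ∀ k j, k ≠ j → x k ≠ x j ∧ x k ≠ -x j)
    (ε : ℝ) (hε : 0 < ε) :
    ∃ ΩF : X → Y, IsZlin ΩF ∧
      (∀ k, ΩF (x k) = Ω (x k)) ∧
      (∀ p, ‖ΩF p - Ω p‖ ≤ (1 + ε) * zconst Ω * ‖p‖) ∧
      zconst ΩF ≤ (3 + ε) * zconst Ω ∧
      FiniteDimensional ℝ (Submodule.span ℝ (ΩF '' (F : Set X))) :=
  statement3_general Ω hΩ F hF n x ε hε

end
end

section
/- Let 0 → Y → E → Z → 0 be an exact sequence of Banach spaces in which E is an L∞-space and Y has the bounded approximation property. Then Z has the bounded approximation property. -/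
open scoped BigOperators

noncomputable section

/-! Lift a finite-dimensional `F ⊆ Z` linearly to `F₁ ⊆ E`; then `F₁` is at a positive angle to
`i(Y)`. Compactness of the bounded part of `F₁` gives a finite-dimensional `D ⊆ Y` with
`dist (i y) (i D) ≤ 4 ‖f + i y‖` for `f ∈ F₁`, so for a BAP operator `S` of `Y` fixing `D` the map
`f + i y ↦ f + i (S y)` is bounded on `F₁ + i(Y)` by a constant independent of `F`. Its values lie
in a finite-dimensional `G ≈ ℓ∞ⁿ`, so it extends to all of `E` coordinatewise by Hahn–Banach, and
since it maps `i(Y)` into `ker q` it descends to a finite-rank operator on `Z` fixing `F`. -/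

open Function Metric
open scoped NNReal

def IsLinftySpaceWith (E : Type*) [NormedAddCommGroup E] [NormedSpace ℝ E] (l : ℝ) : Prop :=
  ∀ F : Submodule ℝ E, FiniteDimensional ℝ F →
    ∃ G : Submodule ℝ E, F ≤ G ∧ FiniteDimensional ℝ G ∧
      ∃ (n : ℕ) (T : G ≃L[ℝ] PiLp ⊤ fun _ : Fin n => ℝ),
        ‖T.toContinuousLinearMap‖ * ‖T.symm.toContinuousLinearMap‖ ≤ l

theorem HasBAPWith.mono {X : Type*} [NormedAddCommGroup X] [NormedSpace ℝ X] {l l' : ℝ}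
    (h : HasBAPWith X l) (hl : l ≤ l') : HasBAPWith X l' := fun F hF =>
  (h F hF).imp fun _ ⟨hfin, hnorm, hfix⟩ => ⟨hfin, hnorm.trans hl, hfix⟩

theorem exists_finite_near_of_isCompact {Y E : Type*} [PseudoMetricSpace E] (i : Y → E)
    {K : Set E} (hK : IsCompact K) :
    ∃ D : Set Y, D.Finite ∧ ∀ f ∈ K, ∀ y, dist f (i y) ≤ 1 → ∃ d ∈ D, dist (i y) (i d) ≤ 4 := by
  obtain ⟨t, -, ht, hKt⟩ := finite_cover_balls_of_compact hK one_pos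
  set s := {g ∈ t | ∃ y, dist g (i y) < 2}
  have : Finite s := (ht.subset (Set.sep_subset _ _)).to_subtype
  choose pick hpick using fun g : s => g.2.2
  refine ⟨Set.range pick, Set.finite_range pick, fun f hf y hfy => ?_⟩
  obtain ⟨g, hgt, hfg⟩ := Set.mem_iUnion₂.mp (hKt hf)
  rw [mem_ball] at hfg
  have hgy : dist g (i y) < 2 := by linarith [dist_triangle g f (i y), dist_comm f g]
  refine ⟨_, Set.mem_range_self ⟨g, hgt, y, hgy⟩, ?_⟩
  linarith [dist_triangle4 (i y) f g (i (pick ⟨g, hgt, y, hgy⟩)), dist_comm f (i y),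
    hpick ⟨g, hgt, y, hgy⟩]

theorem exists_finiteDimensional_near {Y E : Type*} [AddCommGroup Y] [Module ℝ Y]
    [NormedAddCommGroup E] [NormedSpace ℝ E] (i : Y →ₗ[ℝ] E) (F : Submodule ℝ E)
    [FiniteDimensional ℝ F] {c : ℝ} (hc : ∀ f ∈ F, ∀ y, ‖f‖ ≤ c * ‖f + i y‖) :
    ∃ D : Submodule ℝ Y, FiniteDimensional ℝ D ∧
      ∀ f ∈ F, ∀ y, ∃ d ∈ D, ‖i y - i d‖ ≤ 4 * ‖f + i y‖ := by
  have hK : IsCompact (F.subtype '' closedBall 0 c) :=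
    (isCompact_closedBall _ _).image continuous_subtype_val
  obtain ⟨D₀, hD₀, hD₀near⟩ := exists_finite_near_of_isCompact (fun y => -i y) hK
  refine ⟨Submodule.span ℝ D₀, FiniteDimensional.span_of_finite ℝ hD₀, fun f hf y => ?_⟩
  rcases (norm_nonneg (f + i y)).eq_or_lt with ht | ht
  · have hf0 : f = 0 := norm_le_zero_iff.mp (by simpa [← ht] using hc f hf y)
    subst hf0
    refine ⟨0, zero_mem _, ?_⟩
    rw [map_zero, sub_zero, zero_add]
    linarith [norm_nonneg (i y)]
  set t := ‖f + i y‖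
  have hunit : ‖t⁻¹ • f + i (t⁻¹ • y)‖ = 1 := by
    rw [map_smul, ← smul_add, norm_smul, norm_inv, norm_norm, inv_mul_cancel₀ ht.ne']
  have hfK : t⁻¹ • f ∈ F.subtype '' closedBall 0 c := by
    refine ⟨⟨t⁻¹ • f, F.smul_mem _ hf⟩, ?_, rfl⟩
    have := hc _ (F.smul_mem t⁻¹ hf) (t⁻¹ • y)
    rw [hunit, mul_one] at this
    simpa using this
  obtain ⟨d, hd, hnear⟩ := hD₀near _ hfK (t⁻¹ • y) (by rw [dist_eq_norm, sub_neg_eq_add, hunit])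
  refine ⟨t • d, Submodule.smul_mem _ _ (Submodule.subset_span hd), ?_⟩
  rw [dist_neg_neg, dist_eq_norm] at hnear
  calc ‖i y - i (t • d)‖ = t * ‖i (t⁻¹ • y) - i d‖ := by
        rw [← norm_smul_of_nonneg ht.le, smul_sub, map_smul, map_smul, smul_inv_smul₀ ht.ne']
    _ ≤ 4 * t := by nlinarith

theorem exists_extension_pi_norm_le {E ι : Type*} [NormedAddCommGroup E] [NormedSpace ℝ E]
    [Fintype ι] (V : Submodule ℝ E) (φ : V →L[ℝ] (ι → ℝ)) :
    ∃ Φ : E →L[ℝ] (ι → ℝ), (∀ v : V, Φ v = φ v) ∧ ‖Φ‖ ≤ ‖φ‖ := by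
  choose Ψ hΨ hΨnorm using fun k =>
    exists_extension_norm_eq V ((ContinuousLinearMap.proj k).comp φ)
  refine ⟨ContinuousLinearMap.pi Ψ, fun v => funext fun k => hΨ k v,
    ContinuousLinearMap.norm_pi_le_of_le (fun k => ?_) (norm_nonneg φ)⟩
  rw [hΨnorm]
  exact ContinuousLinearMap.opNorm_le_bound _ (norm_nonneg φ) fun v =>
    (norm_le_pi_norm (φ v) k).trans (φ.le_opNorm v)

theorem exists_extension_of_equiv_piLp_top {E G ι : Type*} [NormedAddCommGroup E]
    [NormedSpace ℝ E] [NormedAddCommGroup G] [NormedSpace ℝ G] [Fintype ι] (V : Submodule ℝ E)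
    (T : G ≃L[ℝ] PiLp ⊤ fun _ : ι => ℝ) (φ : V →L[ℝ] G) :
    ∃ Φ : E →L[ℝ] G, (∀ v : V, Φ v = φ v) ∧
      ‖Φ‖ ≤ ‖T.toContinuousLinearMap‖ * ‖T.symm.toContinuousLinearMap‖ * ‖φ‖ := by
  let e := PiLp.equivₗᵢ (𝕜 := ℝ) (β := fun _ : ι => ℝ)
  let U : G ≃L[ℝ] (ι → ℝ) := T.trans e.toContinuousLinearEquiv
  obtain ⟨Φ, hΦ, hΦnorm⟩ := exists_extension_pi_norm_le V (U.toContinuousLinearMap.comp φ)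
  refine ⟨U.symm.toContinuousLinearMap.comp Φ, fun v => by simp [hΦ], ?_⟩
  have hU : ‖U.toContinuousLinearMap‖ ≤ ‖T.toContinuousLinearMap‖ :=
    ContinuousLinearMap.opNorm_le_bound _ (norm_nonneg _) fun x =>
      (e.norm_map (T x)).trans_le (T.toContinuousLinearMap.le_opNorm x)
  have hUsymm : ‖U.symm.toContinuousLinearMap‖ ≤ ‖T.symm.toContinuousLinearMap‖ :=
    ContinuousLinearMap.opNorm_le_bound _ (norm_nonneg _) fun x =>
      (T.symm.toContinuousLinearMap.le_opNorm (e.symm x)).trans_eq (by rw [e.symm.norm_map])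
  calc ‖U.symm.toContinuousLinearMap.comp Φ‖
      ≤ ‖U.symm.toContinuousLinearMap‖ * (‖U.toContinuousLinearMap‖ * ‖φ‖) :=
        (ContinuousLinearMap.opNorm_comp_le _ _).trans <| by
          gcongr; exact hΦnorm.trans (ContinuousLinearMap.opNorm_comp_le _ _)
    _ ≤ ‖T.toContinuousLinearMap‖ * ‖T.symm.toContinuousLinearMap‖ * ‖φ‖ := by
      rw [mul_left_comm, ← mul_assoc]; gcongr

theorem ContinuousLinearMap.exists_comp_eq_of_ker_le {E Z W : Type*} [NormedAddCommGroup E]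
    [NormedSpace ℝ E] [NormedAddCommGroup Z] [NormedSpace ℝ Z] [NormedAddCommGroup W]
    [NormedSpace ℝ W] (q : E →L[ℝ] Z) {c : ℝ} (hc : 0 ≤ c)
    (hq : ∀ z, ∃ x, q x = z ∧ ‖x‖ ≤ c * ‖z‖) (A : E →L[ℝ] W)
    (hA : LinearMap.ker (q : E →ₗ[ℝ] Z) ≤ LinearMap.ker (A : E →ₗ[ℝ] W)) :
    ∃ B : Z →L[ℝ] W, (∀ x, B (q x) = A x) ∧ ‖B‖ ≤ c * ‖A‖ := by
  have hsurj : Surjective q := fun z => (hq z).imp fun _ => And.left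
  let B : Z →ₗ[ℝ] W := (LinearMap.ker (q : E →ₗ[ℝ] Z)).liftQ A hA ∘ₗ
    ((q : E →ₗ[ℝ] Z).quotKerEquivOfSurjective hsurj).symm.toLinearMap
  have hB : ∀ x, B (q x) = A x := fun x => by
    have := LinearMap.quotKerEquivOfSurjective_symm_apply (q : E →ₗ[ℝ] Z) hsurj x
    simp only [ContinuousLinearMap.coe_coe] at this
    simp [B, this]
  have hBnorm : ∀ z, ‖B z‖ ≤ (c * ‖A‖) * ‖z‖ := fun z => by
    obtain ⟨x, rfl, hx⟩ := hq z
    rw [hB, mul_comm c, mul_assoc]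
    exact (A.le_opNorm x).trans (by gcongr)
  exact ⟨B.mkContinuous _ hBnorm, hB, B.mkContinuous_norm_le (by positivity) hBnorm⟩

theorem Submodule.exists_linearMap_eq_of_disjoint {K E F : Type*} [DivisionRing K]
    [AddCommGroup E] [Module K E] [AddCommGroup F] [Module K F] {p q : Submodule K E}
    (h : Disjoint p q) (φ : p →ₗ[K] F) (ψ : E →ₗ[K] F) :
    ∃ w : E →ₗ[K] F, (∀ x : p, w x = φ x) ∧ ∀ x ∈ q, w x = ψ x := by
  obtain ⟨W, hqW, hW⟩ := h.symm.exists_isCompl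
  exact ⟨LinearMap.ofIsCompl hW.symm φ (ψ ∘ₗ W.subtype), LinearMap.ofIsCompl_apply_left _,
    fun x hx => LinearMap.ofIsCompl_apply_right hW.symm ⟨x, hqW hx⟩⟩

section

variable {Y E : Type*} [NormedAddCommGroup Y] [NormedSpace ℝ Y] [NormedAddCommGroup E]
  [NormedSpace ℝ E]

theorem exists_linearMap_comp_eq_fixing_norm_le (i : Y →L[ℝ] E) {K : ℝ≥0}
    (hK : AntilipschitzWith K i)
    {F : Submodule ℝ E} (hdisj : Disjoint (LinearMap.range (i : Y →ₗ[ℝ] E)) F)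
    {D : Submodule ℝ Y} (hD : ∀ f ∈ F, ∀ y, ∃ d ∈ D, ‖i y - i d‖ ≤ 4 * ‖f + i y‖)
    (S : Y →L[ℝ] Y) (hS : ∀ d ∈ D, S d = d) :
    ∃ w : E →ₗ[ℝ] E, (∀ y, w (i y) = i (S y)) ∧ (∀ f ∈ F, w f = f) ∧
      ∀ f ∈ F, ∀ y, ‖w (f + i y)‖ ≤ (1 + 4 * K * ‖i‖ * (‖S‖ + 1)) * ‖f + i y‖ := by
  let e := LinearEquiv.ofInjective (i : Y →ₗ[ℝ] E) hK.injective
  obtain ⟨w, hwe, hwF⟩ := Submodule.exists_linearMap_eq_of_disjoint hdisj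
    ((i : Y →ₗ[ℝ] E) ∘ₗ (S : Y →ₗ[ℝ] Y) ∘ₗ e.symm.toLinearMap) LinearMap.id
  have hwi : ∀ y, w (i y) = i (S y) := fun y => by simpa [e] using hwe (e y)
  refine ⟨w, hwi, hwF, fun f hf y => ?_⟩
  obtain ⟨d, hd, hnear⟩ := hD f hf y
  have hw : w (f + i y) = (f + i y) + i ((S - 1) (y - d)) := by
    rw [map_add, hwF f hf, hwi]
    simp only [sub_apply, one_apply_eq_self, map_sub, hS d hd, LinearMap.id_apply]
    abel
  have hyd : ‖y - d‖ ≤ K * (4 * ‖f + i y‖) := by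
    rw [← dist_eq_norm]
    exact (hK.le_mul_dist y d).trans (by rw [dist_eq_norm]; gcongr)
  have hS1 : ‖S - 1‖ ≤ ‖S‖ + 1 :=
    (norm_sub_le _ _).trans (by gcongr; exact ContinuousLinearMap.norm_id_le)
  calc ‖w (f + i y)‖ ≤ ‖f + i y‖ + ‖i‖ * (‖S - 1‖ * ‖y - d‖) := by
        rw [hw]
        grw [norm_add_le, i.le_opNorm, ContinuousLinearMap.le_opNorm]
    _ ≤ ‖f + i y‖ + ‖i‖ * ((‖S‖ + 1) * (K * (4 * ‖f + i y‖))) := by gcongr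
    _ = (1 + 4 * K * ‖i‖ * (‖S‖ + 1)) * ‖f + i y‖ := by ring

theorem disjoint_range_of_norm_le (i : Y →ₗ[ℝ] E) {F : Submodule ℝ E} {c : ℝ}
    (hc : ∀ f ∈ F, ∀ y, ‖f‖ ≤ c * ‖f + i y‖) : Disjoint (LinearMap.range i) F := by
  rw [Submodule.disjoint_def]
  rintro _ ⟨y, rfl⟩ hy
  simpa using hc _ hy (-y)

theorem exists_finiteRank_fixing_of_isLinftySpaceWith (i : Y →L[ℝ] E) {K : ℝ≥0}
    (hK : AntilipschitzWith K i) {lam mu : ℝ} (hE : IsLinftySpaceWith E lam)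
    (hY : HasBAPWith Y mu) (F : Submodule ℝ E) [FiniteDimensional ℝ F] {c : ℝ}
    (hc : ∀ f ∈ F, ∀ y, ‖f‖ ≤ c * ‖f + i y‖) :
    ∃ J : E →L[ℝ] E, FiniteDimensional ℝ (LinearMap.range (J : E →ₗ[ℝ] E)) ∧
      ‖J‖ ≤ lam * (1 + 4 * K * ‖i‖ * (mu + 1)) ∧ (∀ f ∈ F, J f = f) ∧
      ∀ y, J (i y) ∈ LinearMap.range (i : Y →ₗ[ℝ] E) := by
  obtain ⟨D, hDfin, hD⟩ := exists_finiteDimensional_near (i : Y →ₗ[ℝ] E) F hc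
  obtain ⟨S, hSfin, hSnorm, hSD⟩ := hY D hDfin
  obtain ⟨w, hwi, hwF, hwnorm⟩ :=
    exists_linearMap_comp_eq_fixing_norm_le i hK (disjoint_range_of_norm_le _ hc) hD S hSD
  obtain ⟨G, hG, hGfin, n, T, hT⟩ :=
    hE (F ⊔ (LinearMap.range (S : Y →ₗ[ℝ] Y)).map (i : Y →ₗ[ℝ] E)) inferInstance
  set C := 1 + 4 * K * ‖i‖ * (mu + 1) with hCdef
  have hC : 0 ≤ C := by have := (norm_nonneg S).trans hSnorm; positivity
  set V := F ⊔ LinearMap.range (i : Y →ₗ[ℝ] E)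
  have hwV : ∀ x ∈ V, w x ∈ G ∧ ‖w x‖ ≤ C * ‖x‖ := by
    intro x hx
    obtain ⟨f, hf, _, ⟨y, rfl⟩, rfl⟩ := Submodule.mem_sup.mp hx
    rw [ContinuousLinearMap.coe_coe]
    refine ⟨?_, (hwnorm f hf y).trans (by rw [hCdef]; gcongr)⟩
    rw [map_add, hwF f hf, hwi]
    exact hG (Submodule.add_mem_sup hf ⟨S y, LinearMap.mem_range_self _ y, rfl⟩)
  let φ : V →L[ℝ] G := LinearMap.mkContinuous
    ((w.domRestrict V).codRestrict G fun x => (hwV x x.2).1) C fun x => (hwV x x.2).2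
  obtain ⟨Φ, hΦ, hΦnorm⟩ := exists_extension_of_equiv_piLp_top V T φ
  have hJV : ∀ x ∈ V, G.subtypeL (Φ x) = w x := fun x hx => congrArg Subtype.val (hΦ ⟨x, hx⟩)
  refine ⟨G.subtypeL ∘L Φ, ?_, ?_, fun f hf => ?_, fun y => ?_⟩
  · refine Submodule.finiteDimensional_of_le (S₂ := G) ?_
    rintro _ ⟨x, rfl⟩
    exact (Φ x).2
  · have hlam : 0 ≤ lam := le_trans (by positivity) hT
    calc ‖G.subtypeL ∘L Φ‖ ≤ ‖Φ‖ := (ContinuousLinearMap.opNorm_comp_le _ _).trans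
          (mul_le_of_le_one_left (norm_nonneg _) (Submodule.norm_subtypeL_le G))
      _ ≤ lam * C := hΦnorm.trans (by gcongr; exact LinearMap.mkContinuous_norm_le _ hC _)
  · simpa [hwF f hf] using hJV f (Submodule.mem_sup_left hf)
  · have hy : i y ∈ V := Submodule.mem_sup_right ⟨y, rfl⟩
    rw [ContinuousLinearMap.comp_apply, hJV _ hy, hwi]
    exact LinearMap.mem_range_self _ _

theorem hasBAPWith_of_exact {Z : Type*} [NormedAddCommGroup Z] [NormedSpace ℝ Z]
    (i : Y →L[ℝ] E) (q : E →L[ℝ] Z)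
    (hiq : LinearMap.range (i : Y →ₗ[ℝ] E) = LinearMap.ker (q : E →ₗ[ℝ] Z))
    {K : ℝ≥0} (hK : AntilipschitzWith K i) {c₀ : ℝ} (hc₀ : 0 ≤ c₀)
    (hq : ∀ z, ∃ x, q x = z ∧ ‖x‖ ≤ c₀ * ‖z‖) {lam mu : ℝ} (hE : IsLinftySpaceWith E lam)
    (hY : HasBAPWith Y mu) :
    HasBAPWith Z (c₀ * (‖q‖ * (lam * (1 + 4 * K * ‖i‖ * (mu + 1))))) := by
  intro F hF
  have hsurj : Surjective q := fun z => (hq z).imp fun _ => And.left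
  obtain ⟨u, hu⟩ := (q : E →ₗ[ℝ] Z).exists_rightInverse_of_surjective
    (LinearMap.range_eq_top.mpr hsurj)
  have hqu : ∀ z, q (u z) = z := fun z => LinearMap.congr_fun hu z
  have hqi : ∀ y, q (i y) = 0 := fun y =>
    LinearMap.mem_ker.mp (hiq ▸ LinearMap.mem_range_self (i : Y →ₗ[ℝ] E) y)
  let u₀ : F →L[ℝ] E := LinearMap.toContinuousLinearMap (u ∘ₗ F.subtype)
  have hc : ∀ f ∈ LinearMap.range (u ∘ₗ F.subtype), ∀ y, ‖f‖ ≤ ‖u₀‖ * ‖q‖ * ‖f + i y‖ := by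
    rintro _ ⟨v, rfl⟩ y
    have hv : q (u v + i y) = v := by rw [map_add, hqu, hqi, add_zero]
    calc ‖u v‖ = ‖u₀ v‖ := rfl
      _ ≤ ‖u₀‖ * ‖q (u v + i y)‖ := by rw [hv]; exact u₀.le_opNorm v
      _ ≤ ‖u₀‖ * ‖q‖ * ‖u v + i y‖ := by rw [mul_assoc]; gcongr; exact q.le_opNorm _
  obtain ⟨J, hJfin, hJnorm, hJu, hJi⟩ :=
    exists_finiteRank_fixing_of_isLinftySpaceWith i hK hE hY _ hc
  have hker : LinearMap.ker (q : E →ₗ[ℝ] Z) ≤ LinearMap.ker (q ∘L J : E →ₗ[ℝ] Z) := by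
    rw [← hiq]
    rintro _ ⟨y, rfl⟩
    obtain ⟨y', hy'⟩ := hJi y
    simp [← hy', hqi]
  obtain ⟨T, hTq, hTnorm⟩ := q.exists_comp_eq_of_ker_le hc₀ hq (q ∘L J) hker
  refine ⟨T, ?_, ?_, fun v hv => ?_⟩
  · refine Submodule.finiteDimensional_of_le
      (S₂ := (LinearMap.range (J : E →ₗ[ℝ] E)).map (q : E →ₗ[ℝ] Z)) ?_
    rintro _ ⟨z, rfl⟩
    obtain ⟨x, rfl, -⟩ := hq z
    exact ⟨J x, LinearMap.mem_range_self _ x, (hTq x).symm⟩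
  · calc ‖T‖ ≤ c₀ * ‖q ∘L J‖ := hTnorm
      _ ≤ c₀ * (‖q‖ * (lam * (1 + 4 * K * ‖i‖ * (mu + 1)))) := by
        gcongr
        exact (ContinuousLinearMap.opNorm_comp_le _ _).trans (by gcongr)
  · have hJv := hJu (u v) ⟨⟨v, hv⟩, rfl⟩
    rw [← hqu v, hTq, ContinuousLinearMap.comp_apply, hJv]

end

/-- Figiel–Johnson–Pełczyński: if `0 → Y → E → Z → 0` is exact with `E` an
`𝓛∞`-space and `Y` has the BAP, then `Z` has the BAP. -/
theorem statement13 {Y E Z : Type*}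
    [NormedAddCommGroup Y] [NormedSpace ℝ Y] [CompleteSpace Y]
    [NormedAddCommGroup E] [NormedSpace ℝ E] [CompleteSpace E]
    [NormedAddCommGroup Z] [NormedSpace ℝ Z] [CompleteSpace Z]
    (i : Y →L[ℝ] E) (q : E →L[ℝ] Z) (hexact : IsExactSeq i q)
    (hE : IsLinftySpace E) (hY : HasBAP Y) : HasBAP Z := by
  obtain ⟨hi, hq, hiq⟩ := hexact
  obtain ⟨lam, -, hE⟩ := hE
  obtain ⟨mu, -, hY⟩ := hY
  obtain ⟨c₀, hc₀, hpre⟩ := q.exists_preimage_norm_le hq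
  have hclosed : IsClosed (Set.range i) := by
    have : Set.range i = LinearMap.ker (q : E →ₗ[ℝ] Z) := by
      rw [← hiq, LinearMap.coe_range, ContinuousLinearMap.coe_coe]
    rw [this]
    exact q.isClosed_ker
  obtain ⟨K, hK⟩ := i.antilipschitz_of_injective_of_isClosed_range hi hclosed
  exact ⟨_, le_max_left _ _,
    (hasBAPWith_of_exact i q hiq hK hc₀.le hpre hE hY).mono (le_max_right _ _)⟩
end
end
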